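/- If T is a prefix of R with symbolic derivative R' = ∅ (the empty-language expression), then for every interpretation σ, no word in ⟦σ(T)⟧·Σ* belongs to ⟦σ(R)⟧; i.e., ⟦σ(T)⟧·Σ* ∩ ⟦σ(R)⟧ = ∅. -/
import Mathlib


def leftQuot {α : Type} (τ : List α) (L : Language α) : Language α :=
  {τ' | τ ++ τ' ∈ L}

/-- `R'` is the symbolic derivative of `R` over the prefix `T`: for every
    interpretation σ and every word τ ∈ ⟦σ(T)⟧, the word derivative (left
    quotient) satisfies ∂_τ(σ(R)) = σ(R'). -/
def IsSymDeriv {ι α : Type} (T R R' : ι → Language α) : Prop :=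
  ∀ σ : ι, ∀ τ ∈ T σ, leftQuot τ (R σ) = R' σ


/-- Dead state: if the symbolic derivative of R over T is the empty language,
    then for every interpretation σ no extension of a trace in ⟦σ(T)⟧ belongs
    to ⟦σ(R)⟧: ⟦σ(T)⟧·Σ* ∩ ⟦σ(R)⟧ = ∅. -/
theorem symDeriv_dead {ι α : Type} (T R : ι → Language α)
    (h : IsSymDeriv T R (fun _ => (0 : Language α))) :
    ∀ σ : ι, T σ * (⊤ : Language α) ⊓ R σ = (0 : Language α) := by
  intro σ
  ext w
  constructor
  · rintro ⟨hmul, hw⟩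
    obtain ⟨a, ha, b, -, rfl⟩ := Language.mem_mul.mp hmul
    have hb : b ∈ leftQuot a (R σ) := hw
    rw [h σ a ha] at hb
    exact hb.elim
  · rintro ⟨⟩
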